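/- Let γ ∈ (0,1), k > 0, r > 0, and define η = -log(γ)/k and g(R) = r·exp(η·(R/r - 1)). Then for any t ≥ 0 (a natural number or nonnegative real) and any reward R > 0, the exponentially-discounted transformed value γ^t · g(R) exceeds r if and only if R/r > 1 + k·t. -/
import Mathlib

theorem stmt_0 (γ k r : ℝ) (hγ0 : 0 < γ) (hγ1 : γ < 1) (hk : 0 < k) (hr : 0 < r)
    (η : ℝ) (hη : η = -Real.log γ / k)
    (g : ℝ → ℝ) (hg : ∀ R, g R = r * Real.exp (η * (R / r - 1)))
    (t R : ℝ) (ht : 0 ≤ t) (hR : 0 < R) :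
    γ ^ t * g R > r ↔ R / r > 1 + k * t := by
  have hL : 0 < -Real.log γ := by
    have := Real.log_neg hγ0 hγ1
    linarith
  have hrpow : γ ^ t = Real.exp (Real.log γ * t) := Real.rpow_def_of_pos hγ0 t
  rw [hg, hrpow, ← mul_assoc, mul_comm _ r, mul_assoc, ← Real.exp_add, hη]
  rw [gt_iff_lt, lt_mul_iff_one_lt_right hr, Real.one_lt_exp_iff]
  have hpos : 0 < -Real.log γ / k := div_pos hL hk
  have key : Real.log γ * t + -Real.log γ / k * (R / r - 1)
      = -Real.log γ / k * (R / r - 1 - k * t) := by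
    field_simp; ring
  rw [key]
  constructor
  · intro h
    nlinarith
  · intro h
    exact mul_pos hpos (by linarith)
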